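/- Suppose l_1 + c ≥ k and fix I = {u_1 < ⋯ < u_a} ⊆ {1,…,k}. Among all subsets J ⊆ {1,…,k} with |J| = a + c =: b such that (I,J) is l_1-admissible, there is a unique minimal element with respect to the ordering J ≥ J' ⟺ κ(J) ≥ κ(J') componentwise, and it is J_min = {min(u_i, k−b+i) : 1 ≤ i ≤ a} ⊔ [k−c+1, k]. -/

import Mathlib

/-!
List a `b`-element set `J ⊆ [1, k]` increasingly as `j_0 < ⋯ < j_{b-1}`. If `j'_i ≤ j_i` for
every `i`, then `κ(J) ≤ κ(J')` componentwise. For an admissible `J` we have `j_i ≤ u_i` when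
`i < a`, and `j_i ≤ k - b + i + 1` always, since the `b - 1 - i` elements above `j_i` fit
into `[j_i + 1, k]`. The `i`-th element of `J_min` is the smaller of these two bounds, so it
dominates every admissible `J` termwise. Uniqueness holds because `κ(J)` determines `J`.
-/

/-- `κ(I)_α = #{i ∈ I : i ≤ α}`. -/
def kappa (I : Finset ℕ) (α : ℕ) : ℤ := ((I.filter (fun i => i ≤ α)).card : ℤ)

/-- The `i`-th (0-based) smallest element of a finset of naturals, default `0`. -/
def sortedNth (S : Finset ℕ) (i : ℕ) : ℕ := (S.sort (· ≤ ·)).getD i 0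

/-- `J_min = {min(u_i, k−b+i)}_{1≤i≤a} ⊔ [k−c+1, k]`. -/
def Jmin (k a c : ℕ) (u : Fin a → ℕ) : Finset ℕ :=
  (Finset.image (fun i : Fin a => min (u i) (k - (a + c) + ((i : ℕ) + 1))) Finset.univ) ∪
    Finset.Icc (k - c + 1) k

open Finset

lemma sortedNth_eq_orderEmbOfFin (S : Finset ℕ) {n : ℕ} (h : S.card = n) (i : Fin n) :
    sortedNth S i = S.orderEmbOfFin h i := by
  subst h
  rw [orderEmbOfFin_apply, sortedNth, List.getD_eq_getElem _ _ (by simp)]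
  rfl

lemma sortedNth_mem (S : Finset ℕ) {i : ℕ} (hi : i < S.card) : sortedNth S i ∈ S := by
  rw [sortedNth_eq_orderEmbOfFin S rfl ⟨i, hi⟩]
  exact orderEmbOfFin_mem S rfl _

lemma sortedNth_strictMonoOn (S : Finset ℕ) : StrictMonoOn (sortedNth S) (Set.Iio S.card) := by
  intro i hi j hj hij
  rw [sortedNth_eq_orderEmbOfFin S rfl ⟨i, hi⟩, sortedNth_eq_orderEmbOfFin S rfl ⟨j, hj⟩]
  exact (S.orderEmbOfFin rfl).strictMono hij

lemma image_sortedNth_range (S : Finset ℕ) : (range S.card).image (sortedNth S) = S := by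
  ext x
  simp only [mem_image, mem_range]
  constructor
  · rintro ⟨i, hi, rfl⟩
    exact sortedNth_mem S hi
  · intro hx
    obtain ⟨i, rfl⟩ : x ∈ Set.range (S.orderEmbOfFin rfl) := by simpa using hx
    exact ⟨i, i.2, sortedNth_eq_orderEmbOfFin S rfl i⟩

lemma sortedNth_image_range {g : ℕ → ℕ} (hg : StrictMono g) {n i : ℕ} (hi : i < n) :
    sortedNth ((range n).image g) i = g i := by
  have hcard : ((range n).image g).card = n := by
    rw [card_image_of_injective _ hg.injective, card_range]
  rw [sortedNth_eq_orderEmbOfFin _ hcard ⟨i, hi⟩,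
    ← orderEmbOfFin_unique hcard (f := fun j : Fin n => g j)
      (fun j => mem_image_of_mem g (mem_range.2 j.2)) (hg.comp Fin.val_strictMono)]

lemma sortedNth_add_le (S : Finset ℕ) {i d : ℕ} (h : i + d < S.card) :
    sortedNth S i + d ≤ sortedNth S (i + d) := by
  induction d with
  | zero => rfl
  | succ d ih =>
    have hstep := sortedNth_strictMonoOn S (show i + d < S.card by omega) h (by omega)
    have hprev := ih (by omega)
    omega

lemma sortedNth_add_card_le {S : Finset ℕ} {k i : ℕ} (hS : S ⊆ Icc 1 k) (hi : i < S.card) :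
    sortedNth S i + S.card ≤ k + i + 1 := by
  have hlast := sortedNth_add_le S (i := i) (d := S.card - 1 - i) (by omega)
  have hmem := (mem_Icc.1 (hS (sortedNth_mem S (i := i + (S.card - 1 - i)) (by omega)))).2
  omega

lemma kappa_eq_card_filter_range (S : Finset ℕ) (α : ℕ) :
    kappa S α = #((range S.card).filter (sortedNth S · ≤ α)) := by
  unfold kappa
  conv_lhs => rw [← image_sortedNth_range S]
  rw [filter_image, card_image_of_injOn]
  exact (sortedNth_strictMonoOn S).injOn.mono fun i hi => by
    simpa using (mem_filter.1 hi).1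

lemma kappa_le_kappa_of_sortedNth_le {J J' : Finset ℕ} (hcard : J.card = J'.card)
    (h : ∀ i < J.card, sortedNth J' i ≤ sortedNth J i) (α : ℕ) :
    kappa J α ≤ kappa J' α := by
  rw [kappa_eq_card_filter_range, kappa_eq_card_filter_range, ← hcard]
  exact_mod_cast card_le_card fun i hi => by
    simp only [mem_filter, mem_range] at hi ⊢
    exact ⟨hi.1, (h i hi.1).trans hi.2⟩

lemma kappa_zero (J : Finset ℕ) : kappa J 0 = if 0 ∈ J then 1 else 0 := by
  simp only [kappa, Nat.le_zero, filter_eq']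
  split <;> simp

lemma kappa_succ (J : Finset ℕ) (m : ℕ) :
    kappa J (m + 1) = kappa J m + if m + 1 ∈ J then 1 else 0 := by
  have hsplit : J.filter (· ≤ m + 1) = J.filter (· ≤ m) ∪ J.filter (· = m + 1) := by
    rw [← filter_or]
    exact filter_congr fun x _ => by omega
  have hdisj : Disjoint (J.filter (· ≤ m)) (J.filter (· = m + 1)) :=
    disjoint_filter.2 fun x _ hx => by omega
  rw [kappa, hsplit, card_union_of_disjoint hdisj, filter_eq']
  split <;> simp [kappa]

lemma kappa_injective : Function.Injective kappa := by
  intro J J' h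
  ext n
  cases n with
  | zero =>
    have h0 := congrFun h 0
    rw [kappa_zero, kappa_zero] at h0
    split_ifs at h0 <;> simp_all
  | succ m =>
    have hsucc := congrFun h (m + 1)
    rw [kappa_succ, kappa_succ, congrFun h m] at hsucc
    split_ifs at hsucc <;> simp_all

def JminSeq (k a c : ℕ) (u : Fin a → ℕ) (i : ℕ) : ℕ :=
  if h : i < a then min (u ⟨i, h⟩) (k - (a + c) + (i + 1)) else k - (a + c) + (i + 1)

section Jmin

variable {k a c : ℕ} {u : Fin a → ℕ}

lemma JminSeq_strictMono (hu : StrictMono u) : StrictMono (JminSeq k a c u) := by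
  intro i j hij
  unfold JminSeq
  by_cases hja : j < a
  · have hia : i < a := hij.trans hja
    rw [dif_pos hia, dif_pos hja]
    have huij := hu (show (⟨i, hia⟩ : Fin a) < ⟨j, hja⟩ from hij)
    exact lt_min ((min_le_left _ _).trans_lt huij) ((min_le_right _ _).trans_lt (by omega))
  · rw [dif_neg hja]
    split
    · exact (min_le_right _ _).trans_lt (by omega)
    · omega

lemma Jmin_eq_image_range (hbk : a + c ≤ k) :
    Jmin k a c u = (range (a + c)).image (JminSeq k a c u) := by
  ext x
  simp only [Jmin, JminSeq, mem_union, mem_image, mem_univ, true_and, mem_Icc, mem_range]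
  constructor
  · rintro (⟨i, rfl⟩ | ⟨h1, h2⟩)
    · exact ⟨i, by omega, by rw [dif_pos i.isLt]⟩
    · exact ⟨x - (k - (a + c)) - 1, by omega, by rw [dif_neg (by omega)]; omega⟩
  · rintro ⟨i, hi, rfl⟩
    by_cases hia : i < a
    · exact Or.inl ⟨⟨i, hia⟩, by rw [dif_pos hia]⟩
    · rw [dif_neg hia]
      exact Or.inr ⟨by omega, by omega⟩

lemma card_Jmin (hbk : a + c ≤ k) (hu : StrictMono u) : (Jmin k a c u).card = a + c := by
  rw [Jmin_eq_image_range hbk, card_image_of_injective _ (JminSeq_strictMono hu).injective,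
    card_range]

lemma sortedNth_Jmin (hbk : a + c ≤ k) (hu : StrictMono u) {i : ℕ} (hi : i < a + c) :
    sortedNth (Jmin k a c u) i = JminSeq k a c u i := by
  rw [Jmin_eq_image_range hbk]
  exact sortedNth_image_range (JminSeq_strictMono hu) hi

lemma Jmin_subset_Icc (hbk : a + c ≤ k) (hur : ∀ i, u i ∈ Icc 1 k) : Jmin k a c u ⊆ Icc 1 k := by
  rw [Jmin_eq_image_range hbk]
  intro x hx
  obtain ⟨i, hi, rfl⟩ := mem_image.1 hx
  rw [mem_range] at hi
  rw [mem_Icc]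
  unfold JminSeq
  split
  · next h =>
    exact ⟨le_min (mem_Icc.1 (hur ⟨i, h⟩)).1 (by omega), (min_le_right _ _).trans (by omega)⟩
  · omega

lemma sortedNth_Jmin_le (hbk : a + c ≤ k) (hu : StrictMono u) (i : Fin a) :
    sortedNth (Jmin k a c u) i ≤ u i := by
  rw [sortedNth_Jmin hbk hu (by omega), JminSeq, dif_pos i.isLt]
  exact min_le_left _ _

lemma sortedNth_le_JminSeq {J : Finset ℕ} (hJ : J ⊆ Icc 1 k) (hJcard : J.card = a + c)
    (hJadm : ∀ i : Fin a, sortedNth J i ≤ u i) {i : ℕ} (hi : i < a + c) :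
    sortedNth J i ≤ JminSeq k a c u i := by
  have hbound := sortedNth_add_card_le hJ (i := i) (by omega)
  unfold JminSeq
  split
  · next h => exact le_min (hJadm ⟨i, h⟩) (by omega)
  · omega

lemma kappa_Jmin_le (hbk : a + c ≤ k) (hu : StrictMono u) {J : Finset ℕ} (hJ : J ⊆ Icc 1 k)
    (hJcard : J.card = a + c) (hJadm : ∀ i : Fin a, sortedNth J i ≤ u i) (α : ℕ) :
    kappa (Jmin k a c u) α ≤ kappa J α := by
  refine kappa_le_kappa_of_sortedNth_le (by rw [card_Jmin hbk hu, hJcard]) (fun i hi => ?_) α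
  rw [card_Jmin hbk hu] at hi
  rw [sortedNth_Jmin hbk hu hi]
  exact sortedNth_le_JminSeq hJ hJcard hJadm hi

end Jmin

theorem stmt12_general (k a c : ℕ) (hbk : a + c ≤ k)
    (u : Fin a → ℕ) (hu : StrictMono u) (hur : ∀ i, u i ∈ Finset.Icc 1 k) :
    (Jmin k a c u ⊆ Finset.Icc 1 k ∧ (Jmin k a c u).card = a + c ∧
      (∀ i : Fin a, sortedNth (Jmin k a c u) i ≤ u i)) ∧
    (∀ J : Finset ℕ, J ⊆ Finset.Icc 1 k → J.card = a + c →
      (∀ i : Fin a, sortedNth J i ≤ u i) →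
      ∀ α, kappa (Jmin k a c u) α ≤ kappa J α) ∧
    (∀ J : Finset ℕ, J ⊆ Finset.Icc 1 k → J.card = a + c →
      (∀ i : Fin a, sortedNth J i ≤ u i) →
      (∀ J' : Finset ℕ, J' ⊆ Finset.Icc 1 k → J'.card = a + c →
        (∀ i : Fin a, sortedNth J' i ≤ u i) → ∀ α, kappa J α ≤ kappa J' α) →
      J = Jmin k a c u) := by
  have hsub := Jmin_subset_Icc hbk hur
  have hcard := card_Jmin hbk hu
  have hadm := sortedNth_Jmin_le hbk hu
  refine ⟨⟨hsub, hcard, hadm⟩, fun J hJ hJcard hJadm => kappa_Jmin_le hbk hu hJ hJcard hJadm, ?_⟩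
  intro J hJ hJcard hJadm hJmin
  exact kappa_injective <| funext fun α =>
    le_antisymm (hJmin _ hsub hcard hadm α) (kappa_Jmin_le hbk hu hJ hJcard hJadm α)

/-- suppose `l₁ + c ≥ k` and fix `I = {u_1 < ⋯ < u_a} ⊆ {1,…,k}`.
Among subsets `J ⊆ {1,…,k}` of cardinality `b = a+c` such that `(I,J)` is
`l₁`-admissible (here: the `i`-th smallest element of `J` is `≤ u_i` for `i ≤ a`),
the set `J_min` is the unique minimal element for the order `J ≥ J' ⟺ κ(J) ≥ κ(J')`
componentwise. -/
theorem stmt12 (k a c l1 : ℕ) (hl1 : l1 ≤ k) (hlc : k ≤ l1 + c) (hbk : a + c ≤ k)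
    (u : Fin a → ℕ) (hu : StrictMono u) (hur : ∀ i, u i ∈ Finset.Icc 1 k) :
    (Jmin k a c u ⊆ Finset.Icc 1 k ∧ (Jmin k a c u).card = a + c ∧
      (∀ i : Fin a, sortedNth (Jmin k a c u) i ≤ u i)) ∧
    (∀ J : Finset ℕ, J ⊆ Finset.Icc 1 k → J.card = a + c →
      (∀ i : Fin a, sortedNth J i ≤ u i) →
      ∀ α, kappa (Jmin k a c u) α ≤ kappa J α) ∧
    (∀ J : Finset ℕ, J ⊆ Finset.Icc 1 k → J.card = a + c →
      (∀ i : Fin a, sortedNth J i ≤ u i) →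
      (∀ J' : Finset ℕ, J' ⊆ Finset.Icc 1 k → J'.card = a + c →
        (∀ i : Fin a, sortedNth J' i ≤ u i) → ∀ α, kappa J α ≤ kappa J' α) →
      J = Jmin k a c u) :=
  stmt12_general k a c hbk u hu hur
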